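/- arXiv:1506.01060 — 3 statements merged into one kernel-verified Lean document; each statement's English description precedes it below -/
import Mathlib

section
/- Let K be a positive integer, y ∈ ℝ^K, and λ > 0. Let I = {i : y_i > 0} be the index set of strictly positive components of y, and let y_I denote the vector agreeing with y on I and equal to 0 off I. Define x* ∈ ℝ^K by: x*_i = 0 for all i ∉ I; and on I, x*_I = 0 if ‖y_I‖₂ ≤ λ, while x*_I = ((‖y_I‖₂ − λ)/‖y_I‖₂) · y_I if ‖y_I‖₂ > λ. Then x* is the unique minimizer of the function x ↦ (1/2)‖x − y‖₂² + λ‖x‖₂ over the set {x ∈ ℝ^K : x_i ≥ 0 for all i}. -/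
/-!
The problem decouples along the sign pattern of `y`. Writing `y = y_I + (y - y_I)`, the negative
part `y - y_I` is orthogonal to `y_I` and has nonpositive inner product with every point of the
orthant, so on the orthant the objective centred at `y` dominates the one centred at `y_I`
(up to the constant `½‖y - y_I‖²`), with equality along the ray through `y_I`. The minimizer of
the objective centred at `y_I` over the whole space is the group soft-threshold of `y_I`, which
lies on that ray; its optimality comes with the quadratic growth `½‖x - x*‖²` given by strong
convexity, and this growth yields uniqueness.
-/

open RealInnerProductSpace

noncomputable section

section InnerProductSpace

variable {E : Type*} [NormedAddCommGroup E] [InnerProductSpace ℝ E]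

def proxObjective (lam : ℝ) (w x : E) : ℝ := 1 / 2 * ‖x - w‖ ^ 2 + lam * ‖x‖

def groupSoftThreshold (lam : ℝ) (w : E) : E :=
  if ‖w‖ ≤ lam then 0 else ((‖w‖ - lam) / ‖w‖) • w

theorem proxObjective_eq_of_center (lam : ℝ) (w p x : E) :
    proxObjective lam w x = proxObjective lam p x + 1 / 2 * ‖w - p‖ ^ 2 - ⟪x - p, w - p⟫ := by
  have h := norm_sub_sq_real (x - p) (w - p)
  rw [sub_sub_sub_cancel_right] at h
  unfold proxObjective
  linarith

theorem groupSoftThreshold_eq_smul (lam : ℝ) (w : E) :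
    ∃ c : ℝ, 0 ≤ c ∧ groupSoftThreshold lam w = c • w := by
  unfold groupSoftThreshold
  split_ifs with h
  · exact ⟨0, le_rfl, (zero_smul ℝ w).symm⟩
  · exact ⟨_, div_nonneg (by linarith) (norm_nonneg w), rfl⟩

/-- `w - groupSoftThreshold lam w` is a subgradient of `lam * ‖·‖` at `groupSoftThreshold lam w`. -/
theorem inner_sub_groupSoftThreshold_le {lam : ℝ} (hlam : 0 ≤ lam) (w z : E) :
    ⟪w - groupSoftThreshold lam w, z - groupSoftThreshold lam w⟫ ≤
      lam * (‖z‖ - ‖groupSoftThreshold lam w‖) := by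
  have hcs := real_inner_le_norm w z
  unfold groupSoftThreshold
  split_ifs with h
  · simpa using mul_le_mul_of_nonneg_right h (norm_nonneg z) |>.trans' hcs
  · have hw : 0 < ‖w‖ := by linarith
    set c := (‖w‖ - lam) / ‖w‖
    have hc : 0 ≤ c := div_nonneg (by linarith) hw.le
    have hc1 : (1 - c) * ‖w‖ = lam := by simp only [c]; field_simp; ring
    have hc1_nonneg : 0 ≤ 1 - c := nonneg_of_mul_nonneg_left (hc1 ▸ hlam) hw
    clear_value c
    calc ⟪w - c • w, z - c • w⟫ = (1 - c) * ⟪w, z⟫ - lam * (c * ‖w‖) := by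
          simp only [inner_sub_left, inner_sub_right, real_inner_smul_left, real_inner_smul_right]
          rw [real_inner_self_eq_norm_sq]
          linear_combination (-(c * ‖w‖)) * hc1
      _ ≤ lam * ‖z‖ - lam * (c * ‖w‖) := by
          have := mul_le_mul_of_nonneg_left hcs hc1_nonneg
          rw [← mul_assoc, hc1] at this
          linarith
      _ = lam * (‖z‖ - ‖c • w‖) := by
          rw [norm_smul, Real.norm_of_nonneg hc]; ring

theorem proxObjective_groupSoftThreshold_add_le {lam : ℝ} (hlam : 0 ≤ lam) (w z : E) :
    proxObjective lam w (groupSoftThreshold lam w) + 1 / 2 * ‖z - groupSoftThreshold lam w‖ ^ 2 ≤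
      proxObjective lam w z := by
  set p := groupSoftThreshold lam w
  have hsub := inner_sub_groupSoftThreshold_le hlam w z
  rw [proxObjective_eq_of_center lam w p z, real_inner_comm]
  unfold proxObjective
  rw [norm_sub_rev p w]
  linarith

end InnerProductSpace

theorem forall_le_and_eq_of_quadratic_growth {E : Type*} [NormedAddCommGroup E] {f : E → ℝ}
    {s : Set E} {p : E} (h : ∀ x ∈ s, f p + 1 / 2 * ‖x - p‖ ^ 2 ≤ f x) :
    (∀ x ∈ s, f p ≤ f x) ∧ ∀ x ∈ s, f x = f p → x = p := by
  refine ⟨fun x hx => by nlinarith [h x hx], fun x hx hfx => ?_⟩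
  have h0 : ‖x - p‖ ^ 2 ≤ 0 := by linarith [h x hx]
  simpa [sub_eq_zero] using h0

section Orthant

variable {ι : Type*} [Fintype ι] {y yI : EuclideanSpace ℝ ι}

theorem inner_posPart_sub_eq_zero (hyI : ∀ i, yI i = if 0 < y i then y i else 0) :
    ⟪yI, y - yI⟫ = 0 := by
  rw [PiLp.inner_apply]
  refine Finset.sum_eq_zero fun i _ => ?_
  simp only [PiLp.sub_apply, hyI, RCLike.inner_apply, conj_trivial]
  split_ifs <;> ring

theorem inner_sub_posPart_nonpos {x : EuclideanSpace ℝ ι} (hx : ∀ i, 0 ≤ x i)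
    (hyI : ∀ i, yI i = if 0 < y i then y i else 0) :
    ⟪x, y - yI⟫ ≤ 0 := by
  rw [PiLp.inner_apply]
  refine Finset.sum_nonpos fun i _ => ?_
  simp only [PiLp.sub_apply, hyI, RCLike.inner_apply, conj_trivial]
  split_ifs with h
  · simp
  · exact mul_nonpos_of_nonpos_of_nonneg (by linarith) (hx i)

end Orthant

end

theorem prox_nonneg_group_lasso_general (K : ℕ)
    (y : EuclideanSpace ℝ (Fin K)) (lam : ℝ) (hlam : 0 < lam)
    (yI : EuclideanSpace ℝ (Fin K)) (hyI : ∀ i, yI i = if 0 < y i then y i else 0)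
    (xstar : EuclideanSpace ℝ (Fin K))
    (hxstar : xstar = if ‖yI‖ ≤ lam then 0 else ((‖yI‖ - lam) / ‖yI‖) • yI) :
    (∀ i, 0 ≤ xstar i) ∧
    (∀ x : EuclideanSpace ℝ (Fin K), (∀ i, 0 ≤ x i) →
      (1 / 2) * ‖xstar - y‖ ^ 2 + lam * ‖xstar‖ ≤ (1 / 2) * ‖x - y‖ ^ 2 + lam * ‖x‖) ∧
    (∀ x : EuclideanSpace ℝ (Fin K), (∀ i, 0 ≤ x i) →
      (1 / 2) * ‖x - y‖ ^ 2 + lam * ‖x‖ = (1 / 2) * ‖xstar - y‖ ^ 2 + lam * ‖xstar‖ →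
      x = xstar) := by
  obtain ⟨c, hc, hxc⟩ := groupSoftThreshold_eq_smul lam yI
  replace hxc : xstar = c • yI := hxstar.trans hxc
  have hyI_nonneg (i : Fin K) : 0 ≤ yI i := by
    rw [hyI]
    split_ifs with h
    exacts [h.le, le_rfl]
  have hxstar_nonneg (i : Fin K) : 0 ≤ xstar i := hxc ▸ mul_nonneg hc (hyI_nonneg i)
  have hxstar_inner : ⟪xstar - yI, y - yI⟫ = 0 := by
    rw [hxc, inner_sub_left, real_inner_smul_left, inner_posPart_sub_eq_zero hyI, mul_zero,
      sub_zero]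
  have growth : ∀ x : EuclideanSpace ℝ (Fin K), (∀ i, 0 ≤ x i) →
      proxObjective lam y xstar + 1 / 2 * ‖x - xstar‖ ^ 2 ≤ proxObjective lam y x := by
    intro x hx
    have hopt : proxObjective lam yI xstar + 1 / 2 * ‖x - xstar‖ ^ 2 ≤ proxObjective lam yI x :=
      hxstar ▸ proxObjective_groupSoftThreshold_add_le hlam.le yI x
    have hx_inner := inner_sub_posPart_nonpos hx hyI
    rw [proxObjective_eq_of_center lam y yI x, proxObjective_eq_of_center lam y yI xstar,
      hxstar_inner, inner_sub_left, inner_posPart_sub_eq_zero hyI]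
    linarith
  exact ⟨hxstar_nonneg,
    forall_le_and_eq_of_quadratic_growth (s := {x : EuclideanSpace ℝ (Fin K) | ∀ i, 0 ≤ x i})
      growth⟩

/-- closed-form solution of the nonnegative proximal operator of `λ‖·‖₂`.
`x*` (defined piecewise from the positive part `yI` of `y`) is the unique minimizer of
`x ↦ (1/2)‖x − y‖² + λ‖x‖` over the nonnegative orthant. -/
theorem prox_nonneg_group_lasso (K : ℕ) (hK : 0 < K)
    (y : EuclideanSpace ℝ (Fin K)) (lam : ℝ) (hlam : 0 < lam)
    (yI : EuclideanSpace ℝ (Fin K)) (hyI : ∀ i, yI i = if 0 < y i then y i else 0)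
    (xstar : EuclideanSpace ℝ (Fin K))
    (hxstar : xstar = if ‖yI‖ ≤ lam then 0 else ((‖yI‖ - lam) / ‖yI‖) • yI) :
    (∀ i, 0 ≤ xstar i) ∧
    (∀ x : EuclideanSpace ℝ (Fin K), (∀ i, 0 ≤ x i) →
      (1 / 2) * ‖xstar - y‖ ^ 2 + lam * ‖xstar‖ ≤ (1 / 2) * ‖x - y‖ ^ 2 + lam * ‖x‖) ∧
    (∀ x : EuclideanSpace ℝ (Fin K), (∀ i, 0 ≤ x i) →
      (1 / 2) * ‖x - y‖ ^ 2 + lam * ‖x‖ = (1 / 2) * ‖xstar - y‖ ^ 2 + lam * ‖xstar‖ →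
      x = xstar) :=
  prox_nonneg_group_lasso_general K y lam hlam yI hyI xstar hxstar
end

section
/- Let K be a positive integer, y ∈ ℝ^K, and λ > 0. If x* minimizes the function x ↦ (1/2)‖x − y‖₂² + λ‖x‖₂ over the set {x ∈ ℝ^K : x_i ≥ 0 для all i}, then x*_i = 0 for every index i with y_i ≤ 0. -/
/-! Zeroing the `i`-th coordinate of `x*` keeps it in the orthant and does not increase `‖x‖`,
while it changes `½‖x - y‖²` by `y_i x*_i - ½ (x*_i)²`. Minimality therefore forces
`(x*_i)² ≤ 2 y_i x*_i ≤ 0`. -/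

namespace EuclideanSpace

variable {ι : Type*} [DecidableEq ι]

theorem sub_single_self_apply (v : EuclideanSpace ℝ ι) (i j : ι) :
    (v - single i (v i)) j = if j = i then 0 else v j := by
  rw [PiLp.sub_apply, PiLp.single_apply]
  split_ifs with h
  · rw [h, sub_self]
  · rw [sub_zero]

variable [Fintype ι]

theorem norm_sub_single_sq (v : EuclideanSpace ℝ ι) (i : ι) (a : ℝ) :
    ‖v - single i a‖ ^ 2 = ‖v‖ ^ 2 - 2 * a * v i + a ^ 2 := by
  rw [norm_sub_sq_real, inner_single_right, PiLp.norm_single, Real.norm_eq_abs, sq_abs]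
  simp only [conj_trivial]
  ring

theorem norm_sub_single_self_le (v : EuclideanSpace ℝ ι) (i : ι) :
    ‖v - single i (v i)‖ ≤ ‖v‖ := by
  refine le_of_sq_le_sq ?_ (norm_nonneg v)
  rw [norm_sub_single_sq]
  nlinarith [sq_nonneg (v i)]

end EuclideanSpace

theorem prox_nonneg_group_lasso_zero_on_nonpos_general (K : ℕ)
    (y : EuclideanSpace ℝ (Fin K)) (lam : ℝ) (hlam : 0 < lam)
    (xstar : EuclideanSpace ℝ (Fin K)) (hxnn : ∀ i, 0 ≤ xstar i)
    (hmin : ∀ x : EuclideanSpace ℝ (Fin K), (∀ i, 0 ≤ x i) →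
      (1 / 2) * ‖xstar - y‖ ^ 2 + lam * ‖xstar‖ ≤ (1 / 2) * ‖x - y‖ ^ 2 + lam * ‖x‖) :
    ∀ i, y i ≤ 0 → xstar i = 0 := by
  intro i hyi
  set a := xstar i
  have hfeas : ∀ j, 0 ≤ (xstar - EuclideanSpace.single i a) j := fun j => by
    rw [EuclideanSpace.sub_single_self_apply]
    split_ifs
    exacts [le_rfl, hxnn j]
  have hfit :
      ‖xstar - EuclideanSpace.single i a - y‖ ^ 2 = ‖xstar - y‖ ^ 2 - a ^ 2 + 2 * a * y i := by
    rw [sub_right_comm, EuclideanSpace.norm_sub_single_sq, PiLp.sub_apply]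
    ring
  have hpen := mul_le_mul_of_nonneg_left (EuclideanSpace.norm_sub_single_self_le xstar i) hlam.le
  have hsq : a ^ 2 ≤ 2 * a * y i := by linarith [hmin _ hfeas]
  nlinarith [mul_nonpos_of_nonneg_of_nonpos (hxnn i) hyi]

/-- any minimizer of `x ↦ (1/2)‖x − y‖² + λ‖x‖` over the nonnegative
orthant vanishes on every coordinate `i` with `y i ≤ 0`. -/
theorem prox_nonneg_group_lasso_zero_on_nonpos (K : ℕ) (hK : 0 < K)
    (y : EuclideanSpace ℝ (Fin K)) (lam : ℝ) (hlam : 0 < lam)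
    (xstar : EuclideanSpace ℝ (Fin K)) (hxnn : ∀ i, 0 ≤ xstar i)
    (hmin : ∀ x : EuclideanSpace ℝ (Fin K), (∀ i, 0 ≤ x i) →
      (1 / 2) * ‖xstar - y‖ ^ 2 + lam * ‖xstar‖ ≤ (1 / 2) * ‖x - y‖ ^ 2 + lam * ‖x‖) :
    ∀ i, y i ≤ 0 → xstar i = 0 :=
  prox_nonneg_group_lasso_zero_on_nonpos_general K y lam hlam xstar hxnn hmin
end

section
/- Let E be a real Hilbert space, let f : E → ℝ be a convex differentiable function whose gradient is Lipschitz continuous with constant Lf > 0, and let g : E → ℝ be a convex function. Fix x ∈ E, let L ≥ Lf, and suppose x⁺ minimizes over E the function u ↦ ⟨∇f(x), u − x⟩ + (L/2)‖u − x‖² + g(u). Then f(x) + g(x) − f(x⁺) − g(x⁺) ≥ (L/2)‖x⁺ − x‖². -/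
/-!
The step `x⁺` is the minimizer of an `L`-strongly convex model, so comparing the model at `x⁺`
and at `x` gains `(L/2)‖x⁺ - x‖²` beyond plain minimality:
`⟪∇f(x), x⁺ - x⟫ + g x⁺ - g x ≤ -L‖x⁺ - x‖²`.
The descent lemma `f x⁺ ≤ f x + ⟪∇f(x), x⁺ - x⟫ + (Lf/2)‖x⁺ - x‖²` costs at most half of that.
-/

open scoped RealInnerProductSpace NNReal

section

variable {E : Type*} [NormedAddCommGroup E] [InnerProductSpace ℝ E]

theorem StrongConvexOn.add_sq_le_of_isMinOn {s : Set E} {m : ℝ} {φ : E → ℝ} {x y : E}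
    (hφ : StrongConvexOn s m φ) (hmin : IsMinOn φ s x) (hx : x ∈ s) (hy : y ∈ s) :
    φ x + m / 2 * ‖y - x‖ ^ 2 ≤ φ y := by
  have hsegment : ∀ t ∈ Set.Ioo (0 : ℝ) 1, φ x ≤ φ y - (1 - t) * (m / 2 * ‖x - y‖ ^ 2) := by
    rintro t ⟨ht0, ht1⟩
    have hmem : (1 - t) • x + t • y ∈ s := hφ.1 hx hy (by linarith) ht0.le (by ring)
    have hconv := hφ.2 hx hy (by linarith : (0 : ℝ) ≤ 1 - t) ht0.le (by ring)
    have hle := isMinOn_iff.mp hmin _ hmem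
    simp only [smul_eq_mul] at hconv
    nlinarith
  have hlim : Filter.Tendsto (fun t : ℝ => φ y - (1 - t) * (m / 2 * ‖x - y‖ ^ 2))
      (nhdsWithin 0 (Set.Ioi 0)) (nhds (φ y - (1 - 0) * (m / 2 * ‖x - y‖ ^ 2))) :=
    ((continuous_const.sub ((continuous_const.sub continuous_id).mul continuous_const)).tendsto
      0).mono_left nhdsWithin_le_nhds
  have := ge_of_tendsto hlim (Filter.eventually_of_mem (Ioo_mem_nhdsGT one_pos) hsegment)
  rw [norm_sub_rev]
  linarith

theorem ConvexOn.strongConvexOn_inner_add_sq_add {s : Set E} {g : E → ℝ} (hg : ConvexOn ℝ s g)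
    (c x : E) (L : ℝ) :
    StrongConvexOn s L fun u => ⟪c, u - x⟫ + L / 2 * ‖u - x‖ ^ 2 + g u := by
  rw [strongConvexOn_iff_convex]
  have haffine : (fun u => ⟪c, u - x⟫ + L / 2 * ‖u - x‖ ^ 2 + g u - L / 2 * ‖u‖ ^ 2) =
      fun u => g u + (innerₛₗ ℝ (c - L • x) u + (L / 2 * ‖x‖ ^ 2 - ⟪c, x⟫)) := by
    funext u
    simp only [innerₛₗ_apply_apply, norm_sub_sq_real, inner_sub_left, inner_sub_right,
      real_inner_smul_left, real_inner_comm x u]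
    ring
  rw [haffine]
  exact hg.add (((innerₛₗ ℝ (c - L • x)).convexOn hg.1).add_const _)

variable [CompleteSpace E]

theorem HasGradientAt.hasDerivAt_comp_add_smul {f : E → ℝ} {f' x d : E} {t : ℝ}
    (hf : HasGradientAt f f' (x + t • d)) :
    HasDerivAt (fun t : ℝ => f (x + t • d)) ⟪f', d⟫ t := by
  have hline : HasDerivAt (fun t : ℝ => x + t • d) d t := by
    simpa using ((hasDerivAt_id t).smul_const d).const_add x
  have hcomp := hf.hasFDerivAt.comp_hasDerivAt t hline
  simp only [Function.comp_def, InnerProductSpace.toDual_apply_apply] at hcomp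
  exact hcomp

/-- The descent lemma. -/
theorem le_add_inner_add_sq_of_lipschitzWith_gradient {f : E → ℝ} {f' : E → E} {K : ℝ≥0}
    (hf : ∀ x, HasGradientAt f (f' x) x) (hK : LipschitzWith K f') (x y : E) :
    f y ≤ f x + ⟪f' x, y - x⟫ + K / 2 * ‖y - x‖ ^ 2 := by
  set d := y - x
  set ψ : ℝ → ℝ := fun t => f (x + t • d) - t * ⟪f' x, d⟫ - K / 2 * t ^ 2 * ‖d‖ ^ 2
  have hψ : ∀ t, HasDerivAt ψ (⟪f' (x + t • d) - f' x, d⟫ - K * t * ‖d‖ ^ 2) t := by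
    intro t
    have := (((hf (x + t • d)).hasDerivAt_comp_add_smul).sub
      ((hasDerivAt_id t).mul_const ⟪f' x, d⟫)).sub
      (((hasDerivAt_pow 2 t).const_mul (K / 2 : ℝ)).mul_const (‖d‖ ^ 2))
    exact this.congr_deriv (by rw [inner_sub_left]; ring)
  have hψ' : ∀ t ≥ 0, ⟪f' (x + t • d) - f' x, d⟫ - K * t * ‖d‖ ^ 2 ≤ 0 := by
    intro t ht
    rw [sub_nonpos]
    have hlip : ‖f' (x + t • d) - f' x‖ ≤ K * (t * ‖d‖) := by
      simpa [dist_eq_norm, norm_smul, abs_of_nonneg ht] using hK.dist_le_mul (x + t • d) x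
    calc ⟪f' (x + t • d) - f' x, d⟫ ≤ ‖f' (x + t • d) - f' x‖ * ‖d‖ := real_inner_le_norm _ _
      _ ≤ K * (t * ‖d‖) * ‖d‖ := by gcongr
      _ = K * t * ‖d‖ ^ 2 := by ring
  have hanti : AntitoneOn ψ (Set.Ici 0) :=
    antitoneOn_of_hasDerivWithinAt_nonpos (convex_Ici 0)
      (fun t _ => (hψ t).continuousAt.continuousWithinAt)
      (fun t _ => (hψ t).hasDerivWithinAt)
      (fun t ht => hψ' t (le_of_lt (by simpa using ht)))
  have hψ_one_le_zero := hanti Set.self_mem_Ici (by simp : (1 : ℝ) ∈ Set.Ici 0) zero_le_one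
  simp only [ψ, one_smul, zero_smul, add_zero, d, add_sub_cancel] at hψ_one_le_zero
  linarith

end

theorem prox_linearized_sufficient_decrease_general
    {E : Type*} [NormedAddCommGroup E] [InnerProductSpace ℝ E] [CompleteSpace E]
    (f g : E → ℝ) (f' : E → E) (Lf : ℝ) (hLf : 0 < Lf)
    (hgconv : ConvexOn ℝ Set.univ g)
    (hgrad : ∀ x, HasGradientAt f (f' x) x)
    (hlip : LipschitzWith (Real.toNNReal Lf) f')
    (x : E) (L : ℝ) (hL : Lf ≤ L) (xplus : E)
    (hmin : ∀ u : E,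
      ⟪f' x, xplus - x⟫ + (L / 2) * ‖xplus - x‖ ^ 2 + g xplus ≤
        ⟪f' x, u - x⟫ + (L / 2) * ‖u - x‖ ^ 2 + g u) :
    f x + g x - f xplus - g xplus ≥ (L / 2) * ‖xplus - x‖ ^ 2 := by
  have hdescent := le_add_inner_add_sq_of_lipschitzWith_gradient hgrad hlip x xplus
  rw [Real.coe_toNNReal _ hLf.le] at hdescent
  have hgrowth := (hgconv.strongConvexOn_inner_add_sq_add (f' x) x L).add_sq_le_of_isMinOn
    (fun u _ => hmin u) (Set.mem_univ xplus) (Set.mem_univ x)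
  simp only [sub_self, inner_zero_right, norm_zero, norm_sub_rev x xplus] at hgrowth
  linarith [mul_le_mul_of_nonneg_right hL (sq_nonneg ‖xplus - x‖)]

/-- sufficient decrease of a proximal–linearized update. If `f` is
convex and differentiable with `Lf`-Lipschitz gradient, `g` is convex, `L ≥ Lf`,
and `x⁺` minimizes `u ↦ ⟨∇f(x), u − x⟩ + (L/2)‖u − x‖² + g(u)`, then
`f(x) + g(x) − f(x⁺) − g(x⁺) ≥ (L/2)‖x⁺ − x‖²`. -/
theorem prox_linearized_sufficient_decrease
    {E : Type*} [NormedAddCommGroup E] [InnerProductSpace ℝ E] [CompleteSpace E]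
    (f g : E → ℝ) (f' : E → E) (Lf : ℝ) (hLf : 0 < Lf)
    (hfconv : ConvexOn ℝ Set.univ f) (hgconv : ConvexOn ℝ Set.univ g)
    (hgrad : ∀ x, HasGradientAt f (f' x) x)
    (hlip : LipschitzWith (Real.toNNReal Lf) f')
    (x : E) (L : ℝ) (hL : Lf ≤ L) (xplus : E)
    (hmin : ∀ u : E,
      ⟪f' x, xplus - x⟫ + (L / 2) * ‖xplus - x‖ ^ 2 + g xplus ≤
        ⟪f' x, u - x⟫ + (L / 2) * ‖u - x‖ ^ 2 + g u) :
    f x + g x - f xplus - g xplus ≥ (L / 2) * ‖xplus - x‖ ^ 2 :=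
  prox_linearized_sufficient_decrease_general f g f' Lf hLf hgconv hgrad hlip x L hL xplus hmin
end
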